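/- arXiv:1607.05610 — 2 statements merged into one kernel-verified Lean document; each statement's English description precedes it below -/
import Mathlib

section
/- An ideal I on ω is homogeneous if and only if for every B ∉ I there exists A ⊆ B with A ∈ H(I). -/
open Set Filter

/-- `I` is an ideal on the countable set `X`: closed under subsets and finite
unions, contains all finite sets, and does not contain the whole set. -/
def IsIdeal {X : Type*} (I : Set (Set X)) : Prop :=
  (∀ A B : Set X, A ∈ I → B ⊆ A → B ∈ I) ∧
  (∀ A B : Set X, A ∈ I → B ∈ I → A ∪ B ∈ I) ∧
  (∀ A : Set X, A.Finite → A ∈ I) ∧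
  (Set.univ : Set X) ∉ I

/-- The restriction `I|A = {B ∩ A : B ∈ I}`. -/
def restr {X : Type*} (I : Set (Set X)) (A : Set X) : Set (Set X) :=
  {C | ∃ B ∈ I, C = B ∩ A}

/-- `I|A ≅ I|B`: there is a bijection `f : B → A` such that for every
`C ⊆ A`, `C ∈ I|A ↔ f⁻¹[C] ∈ I|B`. -/
def RIso {X : Type*} (I : Set (Set X)) (A B : Set X) : Prop :=
  ∃ f : X → X, Set.BijOn f B A ∧
    ∀ C : Set X, C ⊆ A → (C ∈ restr I A ↔ B ∩ f ⁻¹' C ∈ restr I B)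

/-- The homogeneity family `H(I) = {A : I|A ≅ I}`. -/
def HF {X : Type*} (I : Set (Set X)) : Set (Set X) := {A | RIso I A Set.univ}

/-- `I` is homogeneous if `H(I) = I⁺`. -/
def HomogIdeal {X : Type*} (I : Set (Set X)) : Prop := HF I = {A | A ∉ I}

/-- `I` is anti-homogeneous if `H(I) = I*`. -/
def AntiHomogIdeal {X : Type*} (I : Set (Set X)) : Prop := HF I = {A | Aᶜ ∈ I}

/-- `I ≅ J`: a bijection `f` of underlying sets with `A ∈ I ↔ f⁻¹[A] ∈ J`. -/
def Isomorphic {X Y : Type*} (I : Set (Set X)) (J : Set (Set Y)) : Prop :=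
  ∃ f : Y → X, Function.Bijective f ∧ ∀ A : Set X, A ∈ I ↔ f ⁻¹' A ∈ J

/-- The ideal `Fin ⊕ P(ω)` on `{0,1} × ω` (here `Bool × ℕ`, `true` playing the
role of `1`): all sets `A` with `{n : (1,n) ∈ A}` finite. -/
def FinOplusAll : Set (Set (Bool × ℕ)) := {A | {n : ℕ | (true, n) ∈ A}.Finite}

/-- An ideal on `ω` is admissible if it is not isomorphic to `Fin ⊕ P(ω)`. -/
def Admissible (I : Set (Set ℕ)) : Prop := ¬ Isomorphic I FinOplusAll

/-- An injection `f` is bi-`I`-invariant if `f[A] ∈ I ↔ A ∈ I` for all `A`. -/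
def BiInvariant {X : Type*} (I : Set (Set X)) (f : X → X) : Prop :=
  Function.Injective f ∧ ∀ A : Set X, f '' A ∈ I ↔ A ∈ I

/-- The set of fixed points of `f`. -/
def fixedSet {X : Type*} (f : X → X) : Set X := {x | f x = x}

/-- `I` is a maximal ideal. -/
def MaximalIdeal {X : Type*} (I : Set (Set X)) : Prop :=
  IsIdeal I ∧ ∀ A : Set X, A ∈ I ∨ Aᶜ ∈ I

/-! The nontrivial direction is a Schröder–Bernstein argument for ideals. If `B ⊆ A` and
`f : X → B` witnesses `I|B ≅ I`, then `f` is an injection with `f[D] ∈ I ↔ D ∈ I`. Let `S` be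
the forward orbit of `X \ A` under `f`; the map that is `f` on `S` and the identity off `S` is a
bijection `X → A`, and it still carries `I` onto `I|A`, because `A ∩ S` is covered by the
`f`-image of `S`. -/

section

variable {X : Type*}

def forwardOrbit (f : X → X) (s : Set X) : Set X := ⋃ n, f^[n] '' s

lemma subset_forwardOrbit (f : X → X) (s : Set X) : s ⊆ forwardOrbit f s :=
  fun x hx => mem_iUnion.2 ⟨0, x, hx, rfl⟩

lemma mapsTo_forwardOrbit (f : X → X) (s : Set X) :
    MapsTo f (forwardOrbit f s) (forwardOrbit f s) := by
  intro x hx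
  obtain ⟨n, y, hy, rfl⟩ := mem_iUnion.1 hx
  exact mem_iUnion.2 ⟨n + 1, y, hy, Function.iterate_succ_apply' f n y⟩

lemma forwardOrbit_diff_subset_image (f : X → X) (s : Set X) :
    forwardOrbit f s \ s ⊆ f '' forwardOrbit f s := by
  rintro x ⟨hx, hxs⟩
  obtain ⟨n, y, hy, rfl⟩ := mem_iUnion.1 hx
  cases n with
  | zero => exact absurd hy hxs
  | succ m =>
    exact ⟨f^[m] y, mem_iUnion.2 ⟨m, y, hy, rfl⟩, (Function.iterate_succ_apply' f m y).symm⟩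

open Classical in
lemma bijOn_piecewise_forwardOrbit {f : X → X} {A : Set X} (hf : Function.Injective f)
    (hfA : ∀ x, f x ∈ A) : BijOn ((forwardOrbit f Aᶜ).piecewise f id) univ A := by
  set S := forwardOrbit f Aᶜ
  refine ⟨fun x _ => ?_, ?_, fun a ha => ?_⟩
  · by_cases hx : x ∈ S
    · simpa [hx] using hfA x
    · simpa [hx] using not_not.1 (mt (subset_forwardOrbit f Aᶜ ·) hx)
  · refine injOn_univ.2 ((injective_piecewise_iff _).2 ⟨hf.injOn, injOn_id _, ?_⟩)
    rintro x hx y hy rfl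
    exact hy (mapsTo_forwardOrbit f Aᶜ hx)
  · by_cases haS : a ∈ S
    · obtain ⟨z, hz, rfl⟩ := forwardOrbit_diff_subset_image f Aᶜ ⟨haS, not_not.2 ha⟩
      exact ⟨z, trivial, piecewise_eq_of_mem S f id hz⟩
    · exact ⟨a, trivial, piecewise_eq_of_notMem S f id haS⟩

variable {I : Set (Set X)}

lemma IsIdeal.isLowerSet (hI : IsIdeal I) : IsLowerSet I :=
  fun _ _ hBA hA => hI.1 _ _ hA hBA

lemma IsIdeal.supClosed (hI : IsIdeal I) : SupClosed I :=
  fun _ hA _ hB => hI.2.1 _ _ hA hB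

lemma mem_restr_iff (hI : IsLowerSet I) {A C : Set X} (hCA : C ⊆ A) :
    C ∈ restr I A ↔ C ∈ I := by
  constructor
  · rintro ⟨D, hD, rfl⟩
    exact hI inter_subset_left hD
  · exact fun hC => ⟨C, hC, (inter_eq_left.2 hCA).symm⟩

lemma mem_HF_iff (hI : IsLowerSet I) {A : Set X} :
    A ∈ HF I ↔ ∃ f : X → X, BijOn f univ A ∧ ∀ C ⊆ A, C ∈ I ↔ f ⁻¹' C ∈ I := by
  refine exists_congr fun f => and_congr_right fun _ => forall₂_congr fun C hCA => ?_
  rw [mem_restr_iff hI hCA, univ_inter, mem_restr_iff hI (subset_univ _)]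

lemma notMem_of_mem_HF (hI : IsLowerSet I) (huniv : univ ∉ I) {A : Set X} (hA : A ∈ HF I) :
    A ∉ I := by
  obtain ⟨f, hf, hfI⟩ := (mem_HF_iff hI).1 hA
  rwa [hfI A subset_rfl, preimage_eq_univ_iff.2 (range_subset_iff.2 fun x => hf.mapsTo trivial)]

lemma exists_biInvariant_of_mem_HF (hI : IsLowerSet I) {B : Set X} (hB : B ∈ HF I) :
    ∃ f : X → X, BiInvariant I f ∧ ∀ x, f x ∈ B := by
  obtain ⟨f, hf, hfI⟩ := (mem_HF_iff hI).1 hB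
  have hfB : ∀ x, f x ∈ B := fun x => hf.mapsTo trivial
  have hinj : Function.Injective f := injOn_univ.1 hf.injOn
  refine ⟨f, ⟨hinj, fun D => ?_⟩, hfB⟩
  rw [hfI _ (image_subset_iff.2 fun x _ => hfB x), preimage_image_eq D hinj]

lemma BiInvariant.preimage_mem {f : X → X} (hf : BiInvariant I f) (hI : IsLowerSet I)
    {C : Set X} (hC : C ∈ I) : f ⁻¹' C ∈ I :=
  (hf.2 _).1 (hI (image_preimage_subset f C) hC)

open Classical in
lemma BiInvariant.piecewise_forwardOrbit_preimage_mem_iff {f : X → X} (hf : BiInvariant I f)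
    (hdown : IsLowerSet I) (hsup : SupClosed I) {A C : Set X} (hCA : C ⊆ A) :
    (forwardOrbit f Aᶜ).piecewise f id ⁻¹' C ∈ I ↔ C ∈ I := by
  set S := forwardOrbit f Aᶜ
  rw [piecewise_preimage, Set.ite, preimage_id]
  constructor
  · intro h
    have hCS : C ∩ S ⊆ f '' (f ⁻¹' C ∩ S) := by
      rintro x ⟨hxC, hxS⟩
      obtain ⟨z, hz, rfl⟩ := forwardOrbit_diff_subset_image f Aᶜ ⟨hxS, not_not.2 (hCA hxC)⟩
      exact ⟨z, ⟨hxC, hz⟩, rfl⟩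
    rw [← inter_union_sdiff C S]
    exact hsup (hdown hCS ((hf.2 _).2 (hdown subset_union_left h)))
      (hdown subset_union_right h)
  · intro hC
    exact hsup (hdown inter_subset_left (hf.preimage_mem hdown hC)) (hdown sdiff_subset hC)

lemma mem_HF_of_biInvariant (hdown : IsLowerSet I) (hsup : SupClosed I) {f : X → X}
    (hf : BiInvariant I f) {A : Set X} (hfA : ∀ x, f x ∈ A) : A ∈ HF I := by
  classical
  exact (mem_HF_iff hdown).2 ⟨_, bijOn_piecewise_forwardOrbit hf.1 hfA,
    fun C hCA => (hf.piecewise_forwardOrbit_preimage_mem_iff hdown hsup hCA).symm⟩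

lemma mem_HF_of_subset (hdown : IsLowerSet I) (hsup : SupClosed I) {A B : Set X}
    (hBA : B ⊆ A) (hB : B ∈ HF I) : A ∈ HF I := by
  obtain ⟨f, hf, hfB⟩ := exists_biInvariant_of_mem_HF hdown hB
  exact mem_HF_of_biInvariant hdown hsup hf fun x => hBA (hfB x)

end

/-- `I` is homogeneous iff every `B ∉ I` has a subset in `H(I)`. -/
theorem stmt_2 (I : Set (Set ℕ)) (hI : IsIdeal I) :
    HomogIdeal I ↔ ∀ B : Set ℕ, B ∉ I → ∃ A : Set ℕ, A ⊆ B ∧ A ∈ HF I := by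
  refine ⟨fun hHom B hB => ⟨B, subset_rfl, hHom ▸ hB⟩, fun hsub => ?_⟩
  refine Subset.antisymm (fun A => notMem_of_mem_HF hI.isLowerSet hI.2.2.2) fun A hA => ?_
  obtain ⟨B, hBA, hB⟩ := hsub A hA
  exact mem_HF_of_subset hI.isLowerSet hI.supClosed hBA hB
end

section
/- The Hindman ideal H = {A ⊆ ω : for every infinite B ⊆ ω, FS(B) ⊄ A}, where FS(B) = {∑_{n∈F} n : F a finite nonempty subset of B}, is homogeneous. -/
/-!
An ideal `I` is homogeneous as soon as every `I`-positive set `A` is the target of an injection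
`u : X → A` with `u[E] ∈ I ↔ E ∈ I`: the Schröder–Bernstein bijection `X → A` obtained from `u`
agrees with `u` on the `u`-orbit of `Aᶜ` and with the identity elsewhere, so it transports `I`
onto `I|A`.

For the Hindman ideal, if `FS(B) ⊆ A` pick `d₀ < d₁ < ⋯` in `B` with `dₖ > 2 ∑_{i<k} dᵢ` and send
`∑_{i∈s} 2^i` to `∑_{i∈s} dᵢ`. Expansions along `d` with digits `0, 1, 2` are unique, so this map
is injective and a sum of two of its values is again a value only if the binary digits of the
arguments do not overlap. Hence it carries FS-sets to FS-sets (through blocks whose sums have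
separated binary digits) and pulls FS-sets back to FS-sets. That the Hindman ideal is closed
under unions is Hindman's theorem.
-/

open Set Filter

/-- `FS(B)`: all sums of finite nonempty subsets of `B`. -/
def FS (B : Set ℕ) : Set ℕ :=
  {m | ∃ F : Finset ℕ, ↑F ⊆ B ∧ F.Nonempty ∧ ∑ n ∈ F, n = m}

/-- The Hindman ideal. -/
def HindmanIdeal : Set (Set ℕ) :=
  {A | ∀ B : Set ℕ, B.Infinite → ¬ FS B ⊆ A}

open Function

theorem restr_univ {X : Type*} (I : Set (Set X)) : restr I univ = I := by
  ext C
  simp [restr]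

namespace IsIdeal

variable {X : Type*} {I : Set (Set X)}

theorem mono (hI : IsIdeal I) {A B : Set X} (hA : A ∈ I) (h : B ⊆ A) : B ∈ I :=
  hI.1 A B hA h

theorem union_mem (hI : IsIdeal I) {A B : Set X} (hA : A ∈ I) (hB : B ∈ I) : A ∪ B ∈ I :=
  hI.2.1 A B hA hB

theorem mem_of_subset_union_singleton (hI : IsIdeal I) {A B : Set X} (hA : A ∈ I) (x : X)
    (h : B ⊆ A ∪ {x}) : B ∈ I :=
  hI.mono (hI.union_mem hA (hI.2.2.1 _ (finite_singleton x))) h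

theorem mem_restr_iff (hI : IsIdeal I) {A C : Set X} (hC : C ⊆ A) : C ∈ restr I A ↔ C ∈ I :=
  ⟨fun ⟨_, hB, hCB⟩ => hI.mono hB (hCB ▸ inter_subset_left),
    fun h => ⟨C, h, (inter_eq_left.2 hC).symm⟩⟩

theorem notMem_of_mem_HF (hI : IsIdeal I) {A : Set X} (hA : A ∈ HF I) : A ∉ I := by
  obtain ⟨f, hf, hiso⟩ := hA
  intro hAI
  have hpre : univ ∩ f ⁻¹' A = univ := by
    rw [univ_inter, preimage_eq_univ_iff]
    rintro _ ⟨x, rfl⟩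
    exact hf.mapsTo (mem_univ x)
  have := (hiso A subset_rfl).1 ⟨A, hAI, (inter_self A).symm⟩
  rw [hpre, restr_univ] at this
  exact hI.2.2.2 this

theorem biInvariant_update [DecidableEq X] (hI : IsIdeal I) {u : X → X} (hu : BiInvariant I u)
    (x y : X) (hinj : Injective (update u x y)) :
    BiInvariant I (update u x y) := by
  have image_subset : ∀ v w : X → X, (∀ e ≠ x, v e = w e) → ∀ E, v '' E ⊆ w '' E ∪ {v x} := by
    rintro v w hvw E _ ⟨e, he, rfl⟩
    by_cases hex : e = x
    · exact Or.inr (hex ▸ rfl)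
    · exact Or.inl ⟨e, he, (hvw e hex).symm⟩
  have hagree : ∀ e ≠ x, update u x y e = u e := fun e he => update_of_ne he y u
  refine ⟨hinj, fun E => ⟨fun h => (hu.2 E).1 ?_, fun h => ?_⟩⟩
  · exact hI.mem_of_subset_union_singleton h _
      (image_subset u _ (fun e he => (hagree e he).symm) E)
  · exact hI.mem_of_subset_union_singleton ((hu.2 E).2 h) _ (image_subset _ u hagree E)

theorem mem_HF_of_biInvariant (hI : IsIdeal I) {u : X → X} (hu : BiInvariant I u) {A : Set X}
    (huA : ∀ x, u x ∈ A) : A ∈ HF I := by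
  classical
  set Z := ⋃ n, u^[n] '' Aᶜ
  have hZ_compl : Zᶜ ⊆ A := fun x hx => by_contra fun hxA => hx (mem_iUnion.2 ⟨0, x, hxA, rfl⟩)
  have hZ_maps : MapsTo u Z Z := by
    intro _ hx
    obtain ⟨n, y, hy, rfl⟩ := mem_iUnion.1 hx
    exact mem_iUnion.2 ⟨n + 1, y, hy, iterate_succ_apply' u n y⟩
  have hZA : Z ∩ A ⊆ u '' Z := by
    rintro _ ⟨hx, hxA⟩
    obtain ⟨n, y, hy, rfl⟩ := mem_iUnion.1 hx
    cases n with
    | zero => exact absurd hxA hy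
    | succ n =>
      exact ⟨u^[n] y, mem_iUnion.2 ⟨n, y, hy, rfl⟩, (iterate_succ_apply' u n y).symm⟩
  have hpre : ∀ C, Z.piecewise u id ⁻¹' C = Z ∩ u ⁻¹' C ∪ Zᶜ ∩ C := fun C => by
    rw [piecewise_preimage, Set.ite, inter_comm, preimage_id, sdiff_eq, inter_comm C]
  refine ⟨Z.piecewise u id, ⟨fun x _ => ?_, ?_, fun y hy => ?_⟩, fun C hCA => ?_⟩
  · by_cases hx : x ∈ Z
    · simpa [hx] using huA x
    · simpa [hx] using hZ_compl hx
  · exact ((injective_piecewise_iff Z).2 ⟨hu.1.injOn, injOn_id _,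
      fun x hx y hy h => hy (h ▸ hZ_maps hx : id y ∈ Z)⟩).injOn
  · by_cases hyZ : y ∈ Z
    · obtain ⟨x, hx, rfl⟩ := hZA ⟨hyZ, hy⟩
      exact ⟨x, trivial, piecewise_eq_of_mem _ _ _ hx⟩
    · exact ⟨y, trivial, piecewise_eq_of_notMem _ _ _ hyZ⟩
  rw [univ_inter, restr_univ, hI.mem_restr_iff hCA, hpre]
  constructor
  · intro hC
    refine hI.union_mem (hI.mono ((hu.2 _).1 ?_) inter_subset_right) (hI.mono hC inter_subset_right)
    exact hI.mono hC (image_preimage_subset u C)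
  · intro h
    have hcover : C ⊆ u '' (Z ∩ u ⁻¹' C) ∪ Zᶜ ∩ C := by
      intro y hy
      by_cases hyZ : y ∈ Z
      · obtain ⟨x, hx, rfl⟩ := hZA ⟨hyZ, hCA hy⟩
        exact Or.inl ⟨x, ⟨hx, hy⟩, rfl⟩
      · exact Or.inr ⟨hyZ, hy⟩
    exact hI.mono (hI.union_mem ((hu.2 _).2 (hI.mono h subset_union_left))
      (hI.mono h subset_union_right)) hcover

theorem homogIdeal_of_exists_biInvariant (hI : IsIdeal I)
    (h : ∀ A ∉ I, ∃ u : X → X, BiInvariant I u ∧ ∀ x, u x ∈ A) : HomogIdeal I := by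
  refine Set.ext fun A => ⟨hI.notMem_of_mem_HF, fun hA => ?_⟩
  obtain ⟨u, hu, huA⟩ := h A hA
  exact hI.mem_HF_of_biInvariant hu huA

end IsIdeal

theorem FS_mono {B B' : Set ℕ} (h : B ⊆ B') : FS B ⊆ FS B' :=
  fun _ ⟨F, hF, hne, hsum⟩ => ⟨F, hF.trans h, hne, hsum⟩

theorem subset_FS (B : Set ℕ) : B ⊆ FS B :=
  fun b hb => ⟨{b}, by simpa using hb, Finset.singleton_nonempty b, Finset.sum_singleton id b⟩

theorem mem_FS_image_iff {ι : Type*} {f : ι → ℕ} {Y : Set ι} (hf : InjOn f Y) {m : ℕ} :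
    m ∈ FS (f '' Y) ↔ ∃ G : Finset ι, ↑G ⊆ Y ∧ G.Nonempty ∧ ∑ y ∈ G, f y = m := by
  classical
  constructor
  · rintro ⟨F, hF, hne, rfl⟩
    obtain ⟨G, hGY, rfl⟩ := Finset.subset_set_image_iff.1 hF
    exact ⟨G, hGY, Finset.image_nonempty.1 hne,
      (Finset.sum_image (f := fun n => n) (hf.mono hGY)).symm⟩
  · rintro ⟨G, hGY, hne, rfl⟩
    refine ⟨G.image f, ?_, hne.image f, Finset.sum_image (hf.mono hGY)⟩
    simpa using image_mono hGY

theorem pairwise_disjoint_of_lt {P : ℕ → Finset ℕ}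
    (h : ∀ j k, j < k → ∀ a ∈ P j, ∀ b ∈ P k, a < b) : Pairwise (Disjoint on P) := by
  intro j k hjk
  rcases hjk.lt_or_gt with hlt | hlt
  · exact Finset.disjoint_left.2 fun a ha hb => (h j k hlt a ha a hb).false
  · exact Finset.disjoint_right.2 fun a ha hb => (h k j hlt a ha a hb).false

def prefixSumSeq (h : ℕ → ℕ) (k : ℕ) : ℕ := h (∑ j : Fin k, prefixSumSeq h j)

theorem prefixSumSeq_eq (h : ℕ → ℕ) (k : ℕ) :
    prefixSumSeq h k = h (∑ j ∈ Finset.range k, prefixSumSeq h j) := by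
  rw [prefixSumSeq, Fin.sum_univ_eq_sum_range (prefixSumSeq h)]

theorem exists_finset_sum_eq_of_mem_hindmanFS {M : Type*} [AddCommMonoid M] {a : Stream' M}
    {m : M} (hm : m ∈ Hindman.FS a) : ∃ K : Finset ℕ, K.Nonempty ∧ ∑ i ∈ K, a.get i = m := by
  have hsucc : ∀ (a : Stream' M) (K : Finset ℕ),
      ∑ i ∈ K.map (addRightEmbedding 1), a.get i = ∑ i ∈ K, a.tail.get i :=
    fun a K => Finset.sum_map K _ _
  induction hm with
  | head' a => exact ⟨{0}, Finset.singleton_nonempty 0, Finset.sum_singleton _ 0⟩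
  | tail' a m _ ih =>
    obtain ⟨K, hne, rfl⟩ := ih
    exact ⟨K.map (addRightEmbedding 1), hne.map, hsucc a K⟩
  | cons' a m _ ih =>
    obtain ⟨K, -, rfl⟩ := ih
    have h0 : 0 ∉ K.map (addRightEmbedding 1) := by simp
    exact ⟨insert 0 (K.map (addRightEmbedding 1)), Finset.insert_nonempty _ _, by
      rw [Finset.sum_insert h0, hsucc a K]⟩

theorem hindmanFS_subset_FS_range {a : Stream' ℕ} (ha : Injective a.get) :
    Hindman.FS a ⊆ FS (range a.get) := by
  intro m hm
  obtain ⟨K, hne, rfl⟩ := exists_finset_sum_eq_of_mem_hindmanFS hm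
  rw [← image_univ]
  exact (mem_FS_image_iff ha.injOn).2 ⟨K, subset_univ _, hne, rfl⟩

/-- Each block of `b` is longer than the sum of all earlier terms of `b`, so, `b` being positive,
the block sums strictly increase. -/
theorem exists_infinite_FS_subset_hindmanFS {b : Stream' ℕ} (hb : ∀ i, 0 < b.get i) :
    ∃ X : Set ℕ, X.Infinite ∧ FS X ⊆ Hindman.FS b := by
  set ℓ := prefixSumSeq (fun N => ∑ i ∈ Finset.range N, b.get i + 1)
  set start : ℕ → ℕ := fun k => ∑ j ∈ Finset.range k, ℓ j
  set block : ℕ → Finset ℕ := fun k => Finset.Ico (start k) (start (k + 1))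
  set x : ℕ → ℕ := fun k => ∑ i ∈ block k, b.get i
  have hstart : ∀ k, start (k + 1) = start k + ℓ k := fun k => Finset.sum_range_succ ℓ k
  have hℓ : ∀ k, ℓ k = ∑ i ∈ Finset.range (start k), b.get i + 1 := fun k => prefixSumSeq_eq _ k
  have hstart_mono : Monotone start :=
    monotone_nat_of_le_succ fun k => (hstart k) ▸ Nat.le_add_right _ _
  have hx_lt : ∀ k, x k < x (k + 1) := by
    intro k
    have hcard : (block (k + 1)).card = ℓ (k + 1) := by simp [block, hstart]
    have hlen : ℓ (k + 1) ≤ x (k + 1) := by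
      simpa only [hcard, smul_eq_mul, mul_one] using
        Finset.card_nsmul_le_sum (block (k + 1)) b.get 1 fun i _ => hb i
    have hprefix : x k ≤ ∑ i ∈ Finset.range (start (k + 1)), b.get i :=
      Finset.sum_le_sum_of_subset fun i hi => by simp_all [block]
    rw [hℓ] at hlen
    omega
  have hx_mono : StrictMono x := strictMono_nat_of_lt_succ hx_lt
  have hblock_disj : Pairwise (Disjoint on block) :=
    pairwise_disjoint_of_lt fun j k hjk a ha c hc => by
      simp only [block, Finset.mem_Ico] at ha hc
      have := hstart_mono (show j + 1 ≤ k from hjk)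
      omega
  refine ⟨range x, infinite_range_of_injective hx_mono.injective, ?_⟩
  intro m hm
  rw [← image_univ, mem_FS_image_iff hx_mono.injective.injOn] at hm
  obtain ⟨K, -, ⟨k, hk⟩, rfl⟩ := hm
  rw [← Finset.sum_biUnion (hblock_disj.set_pairwise K)]
  refine Hindman.FS.finsetSum b _ ⟨start k, Finset.mem_biUnion.2 ⟨k, hk, ?_⟩⟩
  simp [block, hstart, hℓ]

theorem notMem_hindmanIdeal_iff {A : Set ℕ} :
    A ∉ HindmanIdeal ↔ ∃ B : Set ℕ, B.Infinite ∧ FS B ⊆ A := by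
  simp [HindmanIdeal]

theorem union_mem_hindmanIdeal {A A' : Set ℕ} (hA : A ∈ HindmanIdeal) (hA' : A' ∈ HindmanIdeal) :
    A ∪ A' ∈ HindmanIdeal := by
  intro B hB hBFS
  set a : Stream' ℕ := fun i => Nat.nth (· ∈ B) (i + 1)
  have ha_mono : StrictMono a := (Nat.nth_strictMono hB).comp (strictMono_id.add_const 1)
  have ha_pos : ∀ i, 0 < a.get i := fun i =>
    (Nat.zero_le _).trans_lt (Nat.nth_strictMono hB i.succ_pos)
  have haB : range a.get ⊆ B := range_subset_iff.2 fun i => Nat.nth_mem_of_infinite hB _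
  have hcover : Hindman.FS a ⊆ ⋃₀ {A \ {0}, A' \ {0}} := by
    intro m hm
    have hm0 : m ≠ 0 := by
      obtain ⟨K, hne, rfl⟩ := exists_finset_sum_eq_of_mem_hindmanFS hm
      exact (Finset.sum_pos (fun i _ => ha_pos i) hne).ne'
    rcases hBFS (FS_mono haB (hindmanFS_subset_FS_range ha_mono.injective hm)) with h | h
    · exact ⟨_, Or.inl rfl, h, hm0⟩
    · exact ⟨_, Or.inr rfl, h, hm0⟩
  obtain ⟨c, hc, b, hbc⟩ := Hindman.FS_partition_regular a _ (toFinite _) hcover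
  have hc0 : ∀ x ∈ c, x ≠ 0 := by rcases hc with rfl | rfl <;> exact fun x hx => hx.2
  obtain ⟨X, hX, hXb⟩ :=
    exists_infinite_FS_subset_hindmanFS fun i =>
      Nat.pos_of_ne_zero (hc0 _ (hbc (Hindman.FS.singleton b i)))
  rcases hc with rfl | rfl
  · exact hA X hX ((hXb.trans hbc).trans sdiff_subset)
  · exact hA' X hX ((hXb.trans hbc).trans sdiff_subset)

theorem isIdeal_hindmanIdeal : IsIdeal HindmanIdeal :=
  ⟨fun _ _ hA hBA C hC hFS => hA C hC (hFS.trans hBA),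
    fun _ _ => union_mem_hindmanIdeal,
    fun _ hA B hB hFS => hB (hA.subset ((subset_FS B).trans hFS)),
    notMem_hindmanIdeal_iff.2 ⟨univ, infinite_univ, subset_univ _⟩⟩

section Superincreasing

variable {d : ℕ → ℕ}

theorem sum_range_mul_le_mul_sum {M : ℕ} {a : ℕ → ℕ} (ha : ∀ i, a i ≤ M) (n : ℕ) :
    ∑ i ∈ Finset.range n, a i * d i ≤ M * ∑ i ∈ Finset.range n, d i := by
  rw [Finset.mul_sum]
  exact Finset.sum_le_sum fun i _ => Nat.mul_le_mul_right _ (ha i)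

theorem eq_of_sum_range_mul_eq {M : ℕ} (hd : ∀ k, M * ∑ i ∈ Finset.range k, d i < d k)
    {a b : ℕ → ℕ} (ha : ∀ i, a i ≤ M) (hb : ∀ i, b i ≤ M) {n : ℕ}
    (h : ∑ i ∈ Finset.range n, a i * d i = ∑ i ∈ Finset.range n, b i * d i) :
    ∀ i < n, a i = b i := by
  induction n with
  | zero => simp
  | succ n ih =>
    rw [Finset.sum_range_succ, Finset.sum_range_succ] at h
    have top_le : ∀ p q : ℕ → ℕ, (∀ i, q i ≤ M) →
        ∑ i ∈ Finset.range n, p i * d i + p n * d n =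
          ∑ i ∈ Finset.range n, q i * d i + q n * d n → p n ≤ q n := by
      intro p q hq h
      by_contra! hlt
      have hsum := sum_range_mul_le_mul_sum (d := d) hq n
      have htop : q n * d n + d n ≤ p n * d n :=
        add_one_mul (q n) (d n) ▸ Nat.mul_le_mul_right _ hlt
      have := hd n
      omega
    have htop : a n = b n := (top_le a b hb h).antisymm (top_le b a ha h.symm)
    rw [htop, add_left_inj] at h
    intro i hi
    rcases (Nat.lt_succ_iff_lt_or_eq.1 hi) with hi | rfl
    exacts [ih h i hi, htop]

theorem strictMono_of_sum_range_lt (hd : ∀ k, ∑ i ∈ Finset.range k, d i < d k) : StrictMono d :=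
  fun _ k hjk =>
    (Finset.single_le_sum (fun _ _ => Nat.zero_le _) (Finset.mem_range.2 hjk)).trans_lt (hd k)

theorem sum_range_lt_of_two_mul_sum_range_lt (hd : ∀ k, 2 * ∑ i ∈ Finset.range k, d i < d k)
    (k : ℕ) : ∑ i ∈ Finset.range k, d i < d k :=
  (Nat.le_mul_of_pos_left _ two_pos).trans_lt (hd k)

theorem sum_eq_sum_range_boole_mul {F : Finset ℕ} {n : ℕ} (hF : F ⊆ Finset.range n) :
    ∑ i ∈ F, d i = ∑ i ∈ Finset.range n, (if i ∈ F then 1 else 0) * d i := by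
  simp_rw [boole_mul]
  rw [← Finset.sum_filter, Finset.filter_mem_eq_inter, Finset.inter_eq_right.2 hF]

theorem injective_finset_sum (hd : ∀ k, ∑ i ∈ Finset.range k, d i < d k) :
    Injective fun s : Finset ℕ => ∑ i ∈ s, d i := by
  intro F G h
  obtain ⟨n, hn⟩ := (F ∪ G).exists_nat_subset_range
  have hcoeff := eq_of_sum_range_mul_eq (M := 1) (by simpa using hd)
    (a := fun i => if i ∈ F then 1 else 0) (b := fun i => if i ∈ G then 1 else 0)
    (fun i => by split_ifs <;> simp) (fun i => by split_ifs <;> simp)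
    (by rw [← sum_eq_sum_range_boole_mul, ← sum_eq_sum_range_boole_mul]; exacts [h,
      Finset.union_subset_right hn, Finset.union_subset_left hn])
  have hmem : ∀ i ∈ F ∪ G, (i ∈ F ↔ i ∈ G) := fun i hi => by
    have := hcoeff i (Finset.mem_range.1 (hn hi))
    by_cases hF : i ∈ F <;> by_cases hG : i ∈ G <;> simp_all
  ext i
  exact ⟨fun hF => (hmem i (Finset.mem_union_left G hF)).1 hF,
    fun hG => (hmem i (Finset.mem_union_right F hG)).2 hG⟩

theorem disjoint_of_sum_add_sum_eq (hd : ∀ k, 2 * ∑ i ∈ Finset.range k, d i < d k)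
    {F G H : Finset ℕ} (h : ∑ i ∈ F, d i + ∑ i ∈ G, d i = ∑ i ∈ H, d i) : Disjoint F G := by
  obtain ⟨n, hn⟩ := (F ∪ G ∪ H).exists_nat_subset_range
  have hF : F ⊆ Finset.range n := fun i hi => hn (by simp [hi])
  have hG : G ⊆ Finset.range n := fun i hi => hn (by simp [hi])
  have hH : H ⊆ Finset.range n := fun i hi => hn (by simp [hi])
  have hcoeff := eq_of_sum_range_mul_eq hd
    (a := fun i => (if i ∈ F then 1 else 0) + (if i ∈ G then 1 else 0))
    (b := fun i => if i ∈ H then 1 else 0)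
    (fun i => by split_ifs <;> simp) (fun i => by split_ifs <;> simp)
    (by simp_rw [add_mul, Finset.sum_add_distrib]
        rwa [← sum_eq_sum_range_boole_mul hF, ← sum_eq_sum_range_boole_mul hG,
          ← sum_eq_sum_range_boole_mul hH])
  refine Finset.disjoint_left.2 fun i hiF hiG => ?_
  have := hcoeff i (Finset.mem_range.1 (hF hiF))
  simp only [hiF, hiG, if_true] at this
  split_ifs at this
  omega

end Superincreasing

open Finset (equivBitIndices)

theorem lt_of_mem_equivBitIndices {n i : ℕ} (hi : i ∈ equivBitIndices n) : i < n :=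
  i.lt_two_pow_self.trans_le (Nat.two_pow_le_of_mem_bitIndices (by simpa using hi))

theorem le_of_mem_equivBitIndices_of_two_pow_dvd {m n i : ℕ} (hmn : 2 ^ m ∣ n)
    (hi : i ∈ equivBitIndices n) : m ≤ i := by
  obtain ⟨t, rfl⟩ := hmn
  simp only [Finset.equivBitIndices_apply, Nat.bitIndices_two_pow_mul, List.mem_toFinset,
    List.mem_map] at hi
  obtain ⟨j, -, rfl⟩ := hi
  exact Nat.le_add_left m j

theorem equivBitIndices_nonempty {n : ℕ} (hn : n ≠ 0) : (equivBitIndices n).Nonempty := by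
  rw [Finset.nonempty_iff_ne_empty]
  intro h
  exact hn (by simpa [h] using (equivBitIndices.symm_apply_apply n).symm)

theorem equivBitIndices_sum {ι : Type*} {K : Finset ι} {x : ι → ℕ}
    (hx : (K : Set ι).PairwiseDisjoint fun k => equivBitIndices (x k)) :
    equivBitIndices (∑ k ∈ K, x k) = K.biUnion fun k => equivBitIndices (x k) := by
  rw [← Equiv.eq_symm_apply, Finset.equivBitIndices_symm_apply,
    Finset.sum_biUnion hx]
  exact Finset.sum_congr rfl fun k _ => (equivBitIndices.symm_apply_apply (x k)).symm

theorem exists_finset_subset_dvd_sum {F : Set ℕ} (hF : F.Infinite) {q : ℕ} (hq : 0 < q) :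
    ∃ G : Finset ℕ, ↑G ⊆ F ∧ G.Nonempty ∧ q ∣ ∑ i ∈ G, i := by
  obtain ⟨r, hr⟩ : ∃ r, {x ∈ F | x % q = r}.Infinite := by
    by_contra! h
    refine hF (((Set.finite_lt_nat q).biUnion fun r _ => h r).subset fun x hx => ?_)
    exact mem_iUnion₂.2 ⟨x % q, Nat.mod_lt x hq, hx, rfl⟩
  obtain ⟨G, hGr, hcard⟩ := hr.exists_subset_card_eq q
  refine ⟨G, hGr.trans (sep_subset _ _), Finset.card_pos.1 (hcard ▸ hq), Nat.dvd_of_mod_eq_zero ?_⟩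
  rw [Finset.sum_nat_mod, Finset.sum_congr rfl fun x hx => (hGr hx).2, Finset.sum_const, hcard,
    smul_eq_mul, Nat.mul_mod_right]

/-- Each block lies beyond the sum `S` of the earlier block sums and has its sum divisible by
`2 ^ S`; this separates both the blocks and the binary digits of their sums. -/
theorem exists_separated_blocks {F : Set ℕ} (hF : F.Infinite) :
    ∃ G : ℕ → Finset ℕ, (∀ k, ↑(G k) ⊆ F ∧ (G k).Nonempty) ∧ Pairwise (Disjoint on G) ∧
      Pairwise (Disjoint on fun k => equivBitIndices (∑ i ∈ G k, i)) ∧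
      StrictMono fun k => ∑ i ∈ G k, i := by
  choose block hblockF hblock_ne hblock_dvd using fun N : ℕ =>
    exists_finset_subset_dvd_sum (hF.sdiff (finite_Iic N)) (pow_pos two_pos N)
  set x := prefixSumSeq fun N => ∑ i ∈ block N, i
  set S : ℕ → ℕ := fun k => ∑ j ∈ Finset.range k, x j
  have hx : ∀ k, ∑ i ∈ block (S k), i = x k := fun k =>
    (prefixSumSeq_eq (fun N => ∑ i ∈ block N, i) k).symm
  have hgt : ∀ k, ∀ i ∈ block (S k), S k < i := fun k i hi => not_le.1 (hblockF _ hi).2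
  have hle_sum : ∀ k, ∀ i ∈ block (S k), i ≤ x k := fun k i hi =>
    hx k ▸ Finset.single_le_sum (f := fun i => i) (fun _ _ => Nat.zero_le _) hi
  have hle : ∀ j k, j < k → x j ≤ S k := fun j k hjk =>
    Finset.single_le_sum (f := x) (fun _ _ => Nat.zero_le _) (Finset.mem_range.2 hjk)
  refine ⟨fun k => block (S k), fun k => ⟨(hblockF _).trans sdiff_subset, hblock_ne _⟩, ?_, ?_, ?_⟩
  · exact pairwise_disjoint_of_lt fun j k hjk a ha b hb =>
      ((hle_sum j a ha).trans (hle j k hjk)).trans_lt (hgt k b hb)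
  · refine pairwise_disjoint_of_lt fun j k hjk a ha b hb => ?_
    simp only [hx] at ha hb
    calc a < x j := lt_of_mem_equivBitIndices ha
      _ ≤ S k := hle j k hjk
      _ ≤ b := le_of_mem_equivBitIndices_of_two_pow_dvd (hx k ▸ hblock_dvd _) hb
  · refine strictMono_nat_of_lt_succ fun k => ?_
    obtain ⟨b, hb⟩ := hblock_ne (S (k + 1))
    simp only [hx]
    exact (hle k (k + 1) k.lt_succ_self).trans_lt ((hgt _ b hb).trans_le (hle_sum _ b hb))

def sumBitIndices (d : ℕ → ℕ) (n : ℕ) : ℕ := ∑ i ∈ equivBitIndices n, d i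

section SumBitIndices

variable {d : ℕ → ℕ}

theorem sumBitIndices_sum {ι : Type*} {K : Finset ι} {x : ι → ℕ}
    (hx : (K : Set ι).PairwiseDisjoint fun k => equivBitIndices (x k)) :
    sumBitIndices d (∑ k ∈ K, x k) = ∑ k ∈ K, sumBitIndices d (x k) := by
  rw [sumBitIndices, equivBitIndices_sum hx, Finset.sum_biUnion hx]
  rfl

theorem sumBitIndices_injective (hd : ∀ k, ∑ i ∈ Finset.range k, d i < d k) :
    Injective (sumBitIndices d) :=
  (injective_finset_sum hd).comp equivBitIndices.injective

theorem exists_infinite_FS_subset_image_sumBitIndices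
    (hd : ∀ k, ∑ i ∈ Finset.range k, d i < d k) {E F : Set ℕ} (hF : F.Infinite)
    (hFE : FS F ⊆ E) : ∃ W : Set ℕ, W.Infinite ∧ FS W ⊆ sumBitIndices d '' E := by
  obtain ⟨G, hGF, hG_disj, hbits_disj, hmono⟩ := exists_separated_blocks hF
  have hinj : Injective fun k => sumBitIndices d (∑ i ∈ G k, i) :=
    (sumBitIndices_injective hd).comp hmono.injective
  refine ⟨range _, infinite_range_of_injective hinj, fun m hm => ?_⟩
  rw [← image_univ, mem_FS_image_iff hinj.injOn] at hm
  obtain ⟨K, -, ⟨k, hk⟩, rfl⟩ := hm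
  refine ⟨∑ k ∈ K, ∑ i ∈ G k, i, hFE ⟨K.biUnion G, ?_, ?_, ?_⟩,
    sumBitIndices_sum (hbits_disj.set_pairwise K)⟩
  · simpa using fun k _ => (hGF k).1
  · exact ⟨_, Finset.mem_biUnion.2 ⟨k, hk, (hGF k).2.choose_spec⟩⟩
  · exact Finset.sum_biUnion (hG_disj.set_pairwise K)

theorem exists_infinite_FS_subset_of_FS_subset_image_sumBitIndices
    (hd : ∀ k, 2 * ∑ i ∈ Finset.range k, d i < d k) {E Y : Set ℕ} (hY : Y.Infinite)
    (hYE : FS Y ⊆ sumBitIndices d '' E) : ∃ E' : Set ℕ, E'.Infinite ∧ FS E' ⊆ E := by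
  have hψ := sumBitIndices_injective (sum_range_lt_of_two_mul_sum_range_lt hd)
  set e := invFun (sumBitIndices d)
  have he : ∀ y ∈ Y, e y ∈ E ∧ sumBitIndices d (e y) = y := fun y hy => by
    obtain ⟨x, hxE, rfl⟩ := hYE (subset_FS Y hy)
    have hex : e (sumBitIndices d x) = x := leftInverse_invFun hψ x
    rw [hex]
    exact ⟨hxE, rfl⟩
  have he_inj : InjOn e Y := fun y hy y' hy' h => by rw [← (he y hy).2, ← (he y' hy').2, h]
  have hdisj : Y.PairwiseDisjoint fun y => equivBitIndices (e y) := by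
    intro y hy y' hy' hne
    obtain ⟨x, -, hx⟩ := hYE ⟨{y, y'}, by simp [insert_subset_iff, hy, hy'],
      Finset.insert_nonempty _ _, Finset.sum_pair hne⟩
    refine disjoint_of_sum_add_sum_eq hd (H := equivBitIndices x) ?_
    change sumBitIndices d (e y) + sumBitIndices d (e y') = sumBitIndices d x
    rw [(he y hy).2, (he y' hy').2, hx]
  refine ⟨e '' Y, hY.image he_inj, fun m hm => ?_⟩
  obtain ⟨G, hGY, hne, rfl⟩ := (mem_FS_image_iff he_inj).1 hm
  obtain ⟨x, hxE, hx⟩ := hYE ⟨G, hGY, hne, rfl⟩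
  have hsum : sumBitIndices d (∑ y ∈ G, e y) = sumBitIndices d x := by
    rw [sumBitIndices_sum (hdisj.subset hGY), hx]
    exact Finset.sum_congr rfl fun y hy => (he y (hGY hy)).2
  rwa [hψ hsum]

theorem biInvariant_sumBitIndices (hd : ∀ k, 2 * ∑ i ∈ Finset.range k, d i < d k) :
    BiInvariant HindmanIdeal (sumBitIndices d) := by
  have hd' := sum_range_lt_of_two_mul_sum_range_lt hd
  refine ⟨sumBitIndices_injective hd', fun E => ⟨fun h => ?_, fun h Y hY hYE => ?_⟩⟩
  · by_contra hE
    obtain ⟨F, hF, hFE⟩ := notMem_hindmanIdeal_iff.1 hE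
    obtain ⟨W, hW, hWE⟩ := exists_infinite_FS_subset_image_sumBitIndices hd' hF hFE
    exact h W hW hWE
  · obtain ⟨E', hE', hE'E⟩ := exists_infinite_FS_subset_of_FS_subset_image_sumBitIndices hd hY hYE
    exact h E' hE' hE'E

end SumBitIndices

theorem exists_seq_two_mul_sum_range_add_lt {B : Set ℕ} (hB : B.Infinite) (a : ℕ) :
    ∃ d : ℕ → ℕ, (∀ k, d k ∈ B) ∧ ∀ k, 2 * ∑ i ∈ Finset.range k, d i + a < d k := by
  choose g hgB hg using fun N => hB.exists_gt N
  refine ⟨prefixSumSeq fun N => g (2 * N + a), fun k => ?_, fun k => ?_⟩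
  all_goals rw [prefixSumSeq_eq]
  exacts [hgB _, hg _]

/-- `sumBitIndices d` sends `0` to `0`, which need not lie in `A`; it is redirected to an element
of `B` below all `d k`. -/
theorem exists_biInvariant_hindmanIdeal {A : Set ℕ} (hA : A ∉ HindmanIdeal) :
    ∃ u : ℕ → ℕ, BiInvariant HindmanIdeal u ∧ ∀ n, u n ∈ A := by
  obtain ⟨B, hB, hBA⟩ := notMem_hindmanIdeal_iff.1 hA
  obtain ⟨a, haB⟩ := hB.nonempty
  obtain ⟨d, hdB, hd⟩ := exists_seq_two_mul_sum_range_add_lt hB a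
  have hd2 : ∀ k, 2 * ∑ i ∈ Finset.range k, d i < d k := fun k => by have := hd k; omega
  have hψ := biInvariant_sumBitIndices hd2
  have hψ_gt : ∀ n ≠ 0, a < sumBitIndices d n := fun n hn => by
    obtain ⟨j, hj⟩ := equivBitIndices_nonempty hn
    exact (Nat.lt_of_add_left_lt (hd j)).trans_le
      (Finset.single_le_sum (fun _ _ => Nat.zero_le _) hj)
  have hinj : Injective (update (sumBitIndices d) 0 a) := by
    intro m n h
    rcases eq_or_ne m 0 with rfl | hm <;> rcases eq_or_ne n 0 with rfl | hn
    · rfl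
    · simp only [update_self, update_of_ne hn] at h
      exact absurd h (hψ_gt n hn).ne
    · simp only [update_self, update_of_ne hm] at h
      exact absurd h.symm (hψ_gt m hm).ne
    · simp only [update_of_ne hm, update_of_ne hn] at h
      exact hψ.1 h
  refine ⟨_, isIdeal_hindmanIdeal.biInvariant_update hψ 0 a hinj, fun n => ?_⟩
  rcases eq_or_ne n 0 with rfl | hn
  · simpa using hBA (subset_FS B haB)
  · rw [update_of_ne hn]
    refine hBA (FS_mono (range_subset_iff.2 hdB) ?_)
    rw [← image_univ, mem_FS_image_iff
      (strictMono_of_sum_range_lt (sum_range_lt_of_two_mul_sum_range_lt hd2)).injective.injOn]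
    exact ⟨_, subset_univ _, equivBitIndices_nonempty hn, rfl⟩

/-- the Hindman ideal is a homogeneous ideal. -/
theorem stmt_5 : IsIdeal HindmanIdeal ∧ HomogIdeal HindmanIdeal :=
  ⟨isIdeal_hindmanIdeal,
    isIdeal_hindmanIdeal.homogIdeal_of_exists_biInvariant fun _ => exists_biInvariant_hindmanIdeal⟩
end
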